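/- Let X₁, …, Xₙ ∈ ℝ^d be data points, let c = (c₁, …, c_{K'}) ∈ (ℝ^d)^{K'} be centers, and let (C_k)_{k=1}^{K'} be an assignment of each data point to one of its closest centers such that every C_k is nonempty. Let c' = (c'₁, …, c'_{K'}) be the k-means update, c'_k = (1/|C_k|)·∑_{i ∈ C_k} X_i. Then for every α ∈ [0,1], the point c^α = (1−α)·c + α·c' on the segment joining c and c' satisfies W_n(c^α) ≤ W_n(c). -/

import Mathlib

open scoped Classical

open RealInnerProductSpace in
/-- Bias–variance decomposition: if `∑ i in S, (m - X i) = 0` then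
`∑ i in S, ‖y - X i‖² = card S • ‖y - m‖² + ∑ i in S, ‖m - X i‖²`. -/
lemma sum_sq_decomp {E : Type*} [NormedAddCommGroup E] [InnerProductSpace ℝ E]
    {ι : Type*} (S : Finset ι) (X : ι → E) (m : E)
    (h0 : ∑ i ∈ S, (m - X i) = 0) (y : E) :
    ∑ i ∈ S, ‖y - X i‖ ^ 2 = (S.card : ℝ) * ‖y - m‖ ^ 2 + ∑ i ∈ S, ‖m - X i‖ ^ 2 := by
  have key : ∀ i, ‖y - X i‖ ^ 2 = ‖y - m‖ ^ 2 + 2 * ⟪y - m, m - X i⟫ + ‖m - X i‖ ^ 2 := by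
    intro i
    have : y - X i = (y - m) + (m - X i) := by abel
    rw [this, norm_add_sq_real]
  simp only [key]
  rw [Finset.sum_add_distrib, Finset.sum_add_distrib, Finset.sum_const, ← Finset.mul_sum,
    ← inner_sum, h0, inner_zero_right]
  ring

/-- The k-means objective for data `X₁,…,Xₙ ∈ ℝ^d` and centers
`c = (c₁,…,c_{K'})`: `W_n(c) = (1/2)·∑ᵢ min_k ‖c_k − X_i‖²`. -/
noncomputable def WnD (d n K' : ℕ) (X : Fin n → EuclideanSpace ℝ (Fin d))
    (c : Fin K' → EuclideanSpace ℝ (Fin d)) : ℝ :=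
  (1 / 2) * ∑ i, ⨅ k, ‖c k - X i‖ ^ 2

/-- along the segment from the current centers `c` to the k-means
update `c'` (cluster means of an assignment of each point to one of its closest
centers, all clusters nonempty), the k-means objective never exceeds its value
at `c`: `W_n(c^α) ≤ W_n(c)` for all `α ∈ [0,1]`. -/
theorem stmt11 (d n K' : ℕ) (hK' : 0 < K')
    (X : Fin n → EuclideanSpace ℝ (Fin d)) (c : Fin K' → EuclideanSpace ℝ (Fin d))
    (A : Fin n → Fin K')
    (hA : ∀ i k, ‖X i - c (A i)‖ ≤ ‖X i - c k‖)
    (hne : ∀ k, (Finset.univ.filter (fun i => A i = k)).Nonempty)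
    (c' : Fin K' → EuclideanSpace ℝ (Fin d))
    (hc' : ∀ k, c' k = ((Finset.univ.filter (fun i => A i = k)).card : ℝ)⁻¹ •
        ∑ i ∈ Finset.univ.filter (fun i => A i = k), X i)
    (α : ℝ) (hα : α ∈ Set.Icc (0 : ℝ) 1) :
    WnD d n K' X (fun k => (1 - α) • c k + α • c' k) ≤ WnD d n K' X c := by
  haveI : Nonempty (Fin K') := ⟨⟨0, hK'⟩⟩
  set S : Fin K' → Finset (Fin n) := fun k => Finset.univ.filter (fun i => A i = k) with hS
  set cα : Fin K' → EuclideanSpace ℝ (Fin d) := fun k => (1 - α) • c k + α • c' k with hcα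
  have hcard : ∀ k, ((S k).card : ℝ) ≠ 0 := fun k => by
    exact_mod_cast (Finset.card_pos.mpr (hne k)).ne'
  have hmean : ∀ k, ∑ i ∈ S k, (c' k - X i) = 0 := by
    intro k
    simp only [hS]
    rw [Finset.sum_sub_distrib, Finset.sum_const, hc' k, ← Nat.cast_smul_eq_nsmul ℝ,
      smul_smul]
    simp only [hS] at hcard
    rw [mul_inv_cancel₀ (hcard k), one_smul, sub_self]
  -- bounds on α
  obtain ⟨hα0, hα1⟩ := hα
  -- key per-cluster inequality
  have hkey : ∀ k, ∑ i ∈ S k, ‖cα k - X i‖ ^ 2 ≤ ∑ i ∈ S k, ‖c k - X i‖ ^ 2 := by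
    intro k
    rw [sum_sq_decomp (S k) X (c' k) (hmean k) (cα k),
      sum_sq_decomp (S k) X (c' k) (hmean k) (c k)]
    gcongr
    have : cα k - c' k = (1 - α) • (c k - c' k) := by
      simp only [hcα, smul_sub]
      have : α • c' k - c' k = -((1 - α) • c' k) := by
        rw [sub_smul, one_smul]; abel
      module
    rw [this, norm_smul]
    have h1 : |1 - α| ≤ 1 := by
      rw [abs_le]; constructor <;> linarith
    calc ‖(1 - α)‖ * ‖c k - c' k‖ ≤ 1 * ‖c k - c' k‖ := by
          exact mul_le_mul_of_nonneg_right h1 (norm_nonneg _)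
      _ = ‖c k - c' k‖ := one_mul _
  -- infimum equals value at A i for centers c
  have hinf : ∀ i, (⨅ k, ‖c k - X i‖ ^ 2) = ‖c (A i) - X i‖ ^ 2 := by
    intro i
    apply le_antisymm
    · exact ciInf_le (Finite.bddBelow_range _) (A i)
    · apply le_ciInf
      intro k
      have := hA i k
      rw [norm_sub_rev (X i), norm_sub_rev (X i)] at this
      exact pow_le_pow_left₀ (norm_nonneg _) this 2
  have hinf2 : ∀ i, (⨅ k, ‖cα k - X i‖ ^ 2) ≤ ‖cα (A i) - X i‖ ^ 2 := by
    intro i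
    exact ciInf_le (Finite.bddBelow_range _) (A i)
  unfold WnD
  have h2 : (0:ℝ) ≤ 1 / 2 := by norm_num
  apply mul_le_mul_of_nonneg_left _ h2
  calc ∑ i, ⨅ k, ‖cα k - X i‖ ^ 2
      ≤ ∑ i, ‖cα (A i) - X i‖ ^ 2 := Finset.sum_le_sum fun i _ => hinf2 i
    _ = ∑ k, ∑ i ∈ S k, ‖cα k - X i‖ ^ 2 := by
        rw [← Finset.sum_fiberwise Finset.univ A (fun i => ‖cα (A i) - X i‖ ^ 2)]
        exact Finset.sum_congr rfl fun k _ => Finset.sum_congr rfl fun i hi => by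
          simp only [hS, Finset.mem_filter] at hi
          rw [hi.2]
    _ ≤ ∑ k, ∑ i ∈ S k, ‖c k - X i‖ ^ 2 := Finset.sum_le_sum fun k _ => hkey k
    _ = ∑ i, ‖c (A i) - X i‖ ^ 2 := by
        rw [← Finset.sum_fiberwise Finset.univ A (fun i => ‖c (A i) - X i‖ ^ 2)]
        exact Finset.sum_congr rfl fun k _ => Finset.sum_congr rfl fun i hi => by
          simp only [hS, Finset.mem_filter] at hi
          rw [hi.2]
    _ = ∑ i, ⨅ k, ‖c k - X i‖ ^ 2 := by
        exact Finset.sum_congr rfl fun i _ => (hinf i).symm
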